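/- arXiv:math/0311277 — 2 statements merged into one kernel-verified Lean document; each statement's English description precedes it below -/
import Mathlib

section
/- Let n ≥ 1. There exists a constant C > 0, depending only on n, with the following property: if R > 0 and h : S^{2n−1} × ℂ → ℂ is a bounded measurable function satisfying h(w,s) = 0 whenever |s| ≥ R, then for every z ∈ ℂⁿ with z ≠ 0 one has |(R*h)(z)| ≤ C·(sup |h|)·max(1, R²/‖z‖²); in particular (R*h)(z) → 0 as ‖z‖ → ∞. -/
open MeasureTheory Metric

noncomputable instance {n : ℕ} : MeasurableSpace (EuclideanSpace ℂ (Fin n)) := borel _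
instance {n : ℕ} : BorelSpace (EuclideanSpace ℂ (Fin n)) := ⟨rfl⟩

/-- The bilinear pairing `⟨z,w⟩ = ∑ⱼ zⱼ wⱼ` on `ℂⁿ`. -/
noncomputable def pairC {n : ℕ} (z w : EuclideanSpace ℂ (Fin n)) : ℂ := ∑ j, z j * w j

/-- The complex Radon transform: the integral of `f` over the affine hyperplane
`{z | ⟨z,w⟩ = s}` with respect to its area measure, i.e. the `(2n-2)`-dimensional
Hausdorff measure of the ambient Euclidean space restricted to the hyperplane. -/
noncomputable def radonC {n : ℕ} (f : EuclideanSpace ℂ (Fin n) → ℂ)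
    (w : EuclideanSpace ℂ (Fin n)) (s : ℂ) : ℂ :=
  ∫ z in {z | pairC z w = s}, f z ∂(μH[(2 * n - 2 : ℝ)])

/-- The dual Radon transform `(R*g)(z) = ∫_{S^{2n-1}} g(w, ⟨z,w⟩) dσ(w)`, where `σ` is
the surface measure (`(2n-1)`-dimensional Hausdorff measure) on the unit sphere. -/
noncomputable def dualRadonC {n : ℕ} (g : EuclideanSpace ℂ (Fin n) → ℂ → ℂ)
    (z : EuclideanSpace ℂ (Fin n)) : ℂ :=
  ∫ w in sphere (0 : EuclideanSpace ℂ (Fin n)) 1, g w (pairC z w) ∂(μH[(2 * n - 1 : ℝ)])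

/-! The bound is crude: `‖R*h(z)‖ ≤ sup ‖h‖ · σ(S^{2n-1})`, and `σ(S^{2n-1})` is finite because
the sphere is covered by finitely many caps, each the image of a bounded piece of an affine real
hyperplane under the radial projection `y ↦ y / ‖y‖`, which is Lipschitz away from the origin.

For the decay, `h(w, ⟨z,w⟩)` vanishes unless `w` lies in the slab `‖⟪v, w⟫‖ < R / ‖z‖` around
the unit vector `v = z̄ / ‖z‖`. By unitary invariance the measure of this slab does not depend
on `v`, and as its width shrinks it tends to the measure of the intersection of the sphere with
a complex hyperplane. That intersection has real dimension `2n - 2`, so its `(2n-1)`-dimensional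
Hausdorff measure vanishes. -/

open Module Bornology Filter Topology
open scoped InnerProductSpace

section Hausdorff

variable {E : Type*} [NormedAddCommGroup E] [MeasurableSpace E] [BorelSpace E]

lemma hausdorffMeasure_lt_top_of_subset_submodule [NormedSpace ℝ E] (K : Submodule ℝ E)
    [FiniteDimensional ℝ K] {s : Set E} (hsK : s ⊆ K) (hs : IsBounded s) :
    μH[finrank ℝ K] s < ⊤ := by
  have himage : ((↑) : K → E) '' ((↑) ⁻¹' s) = s := by
    rwa [Set.image_preimage_eq_inter_range, Subtype.range_coe, Set.inter_eq_left]
  rw [← himage, isometry_subtype_coe.hausdorffMeasure_image (Or.inl (Nat.cast_nonneg _))]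
  obtain ⟨r, hr⟩ := hs.subset_closedBall (0 : E)
  refine (measure_mono fun x hx => ?_).trans_lt (isCompact_closedBall (0 : K) r).measure_lt_top
  simpa [mem_closedBall] using hr hx

lemma hausdorffMeasure_lt_top_of_forall_sub_mem [NormedSpace ℝ E] (K : Submodule ℝ E)
    [FiniteDimensional ℝ K] (x₀ : E) {s : Set E} (hsK : ∀ x ∈ s, x - x₀ ∈ K)
    (hs : IsBounded s) : μH[finrank ℝ K] s < ⊤ := by
  rw [← (IsometryEquiv.subRight x₀).hausdorffMeasure_image]
  refine hausdorffMeasure_lt_top_of_subset_submodule K ?_ ?_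
  · rintro _ ⟨x, hx, rfl⟩
    exact hsK x hx
  · exact (IsometryEquiv.subRight x₀).isometry.lipschitz.isBounded_image hs

lemma hausdorffMeasure_eq_zero_of_subset_submodule [NormedSpace ℝ E] (K : Submodule ℝ E)
    [FiniteDimensional ℝ K] {s : Set E} (hsK : s ⊆ K) (hs : IsBounded s) {d : ℝ}
    (hd : finrank ℝ K < d) : μH[d] s = 0 :=
  (Measure.hausdorffMeasure_zero_or_top hd s).resolve_right
    (hausdorffMeasure_lt_top_of_subset_submodule K hsK hs).ne

end Hausdorff

lemma lipschitzOnWith_inv_norm_smul {E : Type*} [NormedAddCommGroup E] [NormedSpace ℝ E] :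
    LipschitzOnWith 2 (fun x : E => ‖x‖⁻¹ • x) {x | 1 ≤ ‖x‖} := by
  refine LipschitzOnWith.of_dist_le_mul fun x (hx : 1 ≤ ‖x‖) y (hy : 1 ≤ ‖y‖) => ?_
  have hx₀ : 0 < ‖x‖ := one_pos.trans_le hx
  have hy₀ : 0 < ‖y‖ := one_pos.trans_le hy
  have hrescale : ‖(‖x‖⁻¹ - ‖y‖⁻¹) • y‖ ≤ ‖x - y‖ :=
    calc ‖(‖x‖⁻¹ - ‖y‖⁻¹) • y‖ = |‖y‖ - ‖x‖| / ‖x‖ := by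
          rw [norm_smul, Real.norm_eq_abs, inv_sub_inv hx₀.ne' hy₀.ne', abs_div, abs_mul,
            abs_of_pos hx₀, abs_of_pos hy₀]
          field_simp
      _ ≤ |‖y‖ - ‖x‖| := div_le_self (abs_nonneg _) hx
      _ ≤ ‖x - y‖ := by rw [norm_sub_rev]; exact abs_norm_sub_norm_le y x
  calc dist (‖x‖⁻¹ • x) (‖y‖⁻¹ • y) = ‖‖x‖⁻¹ • (x - y) + (‖x‖⁻¹ - ‖y‖⁻¹) • y‖ := by
        rw [dist_eq_norm]; congr 1; module
    _ ≤ ‖x‖⁻¹ * ‖x - y‖ + ‖x - y‖ := by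
        grw [norm_add_le, norm_smul, Real.norm_of_nonneg (inv_nonneg.2 hx₀.le), hrescale]
    _ ≤ 1 * ‖x - y‖ + ‖x - y‖ := by gcongr; exact inv_le_one_of_one_le₀ hx
    _ = 2 * dist x y := by rw [dist_eq_norm]; ring

lemma finrank_orthogonal_span_singleton_add_one {𝕜 F : Type*} [RCLike 𝕜] [NormedAddCommGroup F]
    [InnerProductSpace 𝕜 F] [FiniteDimensional 𝕜 F] {v : F} (hv : v ≠ 0) :
    finrank 𝕜 (𝕜 ∙ v)ᗮ + 1 = finrank 𝕜 F := by
  rw [← (𝕜 ∙ v).finrank_add_finrank_orthogonal, finrank_span_singleton hv, add_comm]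

section RealInnerProductSpace

variable {E : Type*} [NormedAddCommGroup E] [InnerProductSpace ℝ E]

lemma sphere_inter_cap_subset_image (w : E) :
    sphere 0 1 ∩ {x | 1 / 2 < ⟪w, x⟫_ℝ} ⊆
      (fun y : E => ‖y‖⁻¹ • y) '' ({y | ⟪w, y⟫_ℝ = 1} ∩ closedBall 0 2) := by
  rintro x ⟨hx, hwx : 1 / 2 < ⟪w, x⟫_ℝ⟩
  set c := ⟪w, x⟫_ℝ
  have hc : 0 < c := by linarith
  have hnorm : ‖c⁻¹ • x‖ = c⁻¹ := by
    rw [norm_smul, norm_eq_of_mem_sphere ⟨x, hx⟩, mul_one, Real.norm_of_nonneg (inv_nonneg.2 hc.le)]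
  refine ⟨c⁻¹ • x, ⟨?_, ?_⟩, ?_⟩
  · simp [c, real_inner_smul_right, hc.ne']
  · rw [mem_closedBall_zero_iff, hnorm, inv_le_comm₀ hc two_pos]
    linarith
  · beta_reduce
    rw [hnorm, inv_inv, smul_smul, mul_inv_cancel₀ hc.ne', one_smul]

variable [FiniteDimensional ℝ E] [MeasurableSpace E] [BorelSpace E]

lemma hausdorffMeasure_sphere_inter_cap_lt_top {w : E} (hw : ‖w‖ = 1) :
    μH[finrank ℝ E - 1] (sphere 0 1 ∩ {x | 1 / 2 < ⟪w, x⟫_ℝ}) < ⊤ := by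
  have hw₀ : w ≠ 0 := by rintro rfl; simp at hw
  set P := {y | ⟪w, y⟫_ℝ = 1} ∩ closedBall (0 : E) 2
  have hrank : (finrank ℝ (ℝ ∙ w)ᗮ : ℝ) = finrank ℝ E - 1 := by
    rw [← finrank_orthogonal_span_singleton_add_one hw₀]; push_cast; ring
  have hP : μH[finrank ℝ E - 1] P < ⊤ := by
    rw [← hrank]
    refine hausdorffMeasure_lt_top_of_forall_sub_mem _ w (fun y hy => ?_)
      (isBounded_closedBall.subset Set.inter_subset_right)
    rw [Submodule.mem_orthogonal_singleton_iff_inner_right, inner_sub_right, hy.1,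
      real_inner_self_eq_norm_sq, hw]
    norm_num
  have hPD : P ⊆ {y | 1 ≤ ‖y‖} := fun y hy => by
    have hcs := real_inner_le_norm w y
    rwa [hy.1, hw, one_mul] at hcs
  have hd : (0 : ℝ) ≤ finrank ℝ E - 1 := by
    rw [← hrank]; positivity
  refine (measure_mono (sphere_inter_cap_subset_image w)).trans_lt ?_
  refine ((lipschitzOnWith_inv_norm_smul.mono hPD).hausdorffMeasure_image_le hd).trans_lt ?_
  exact ENNReal.mul_lt_top (ENNReal.rpow_lt_top_of_nonneg hd (by simp)) hP

lemma hausdorffMeasure_sphere_lt_top : μH[finrank ℝ E - 1] (sphere (0 : E) 1) < ⊤ := by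
  obtain ⟨t, ht⟩ := (isCompact_sphere (0 : E) 1).elim_finite_subcover
    (fun w : sphere (0 : E) 1 => {x | 1 / 2 < ⟪(w : E), x⟫_ℝ})
    (fun w => isOpen_lt continuous_const (continuous_const.inner continuous_id))
    (fun x hx => Set.mem_iUnion.2 ⟨⟨x, hx⟩, by
      norm_num [norm_eq_of_mem_sphere ⟨x, hx⟩]⟩)
  have hcover : sphere (0 : E) 1 ⊆ ⋃ w ∈ (t : Set (sphere (0 : E) 1)),
      sphere 0 1 ∩ {x | 1 / 2 < ⟪(w : E), x⟫_ℝ} := fun x hx => by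
    obtain ⟨w, hw, hwx⟩ := Set.mem_iUnion₂.1 (ht hx)
    exact Set.mem_iUnion₂.2 ⟨w, hw, hx, hwx⟩
  exact (measure_mono hcover).trans_lt (measure_biUnion_lt_top t.finite_toSet
    fun w _ => hausdorffMeasure_sphere_inter_cap_lt_top (norm_eq_of_mem_sphere w))

end RealInnerProductSpace

section Slab

variable (𝕜 : Type*) {E : Type*} [RCLike 𝕜] [NormedAddCommGroup E] [InnerProductSpace 𝕜 E]

def sphereSlab (v : E) (t : ℝ) : Set E := sphere 0 1 ∩ {w | ‖⟪v, w⟫_𝕜‖ < t}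

variable {𝕜} [FiniteDimensional 𝕜 E]

lemma exists_linearIsometryEquiv_apply_eq {u v : E} (hu : ‖u‖ = 1) (hv : ‖v‖ = 1) :
    ∃ U : E ≃ₗᵢ[𝕜] E, U u = v := by
  have : Nontrivial E := ⟨u, 0, by rintro rfl; simp at hu⟩
  let i₀ : Fin (finrank 𝕜 E) := ⟨0, finrank_pos⟩
  have basis_through : ∀ x : E, ‖x‖ = 1 →
      ∃ b : OrthonormalBasis (Fin (finrank 𝕜 E)) 𝕜 E, b i₀ = x := fun x hx => by
    obtain ⟨b, hb⟩ := Orthonormal.exists_orthonormalBasis_extension_of_card_eq (𝕜 := 𝕜) (by simp)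
      (v := fun _ => x) (s := {i₀}) (orthonormal_subsingleton_iff.2 fun _ => hx)
    exact ⟨b, hb i₀ rfl⟩
  obtain ⟨bu, rfl⟩ := basis_through u hu
  obtain ⟨bv, rfl⟩ := basis_through v hv
  exact ⟨bu.equiv bv (Equiv.refl _), bu.equiv_apply_basis bv _ i₀⟩

lemma hausdorffMeasure_sphereSlab_eq [MeasurableSpace E] [BorelSpace E] {u v : E}
    (hu : ‖u‖ = 1) (hv : ‖v‖ = 1) (d t : ℝ) :
    μH[d] (sphereSlab 𝕜 u t) = μH[d] (sphereSlab 𝕜 v t) := by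
  obtain ⟨U, rfl⟩ := exists_linearIsometryEquiv_apply_eq (𝕜 := 𝕜) hu hv
  have hpre : U ⁻¹' sphereSlab 𝕜 (U u) t = sphereSlab 𝕜 u t := by
    ext w
    simp [sphereSlab, U.inner_map_map]
  rw [← hpre, ← U.coe_toIsometryEquiv, IsometryEquiv.hausdorffMeasure_preimage]

end Slab

section ComplexInnerProductSpace

variable {E : Type*} [NormedAddCommGroup E] [InnerProductSpace ℂ E] [FiniteDimensional ℂ E]
  [MeasurableSpace E] [BorelSpace E]

lemma hausdorffMeasure_sphere_lt_top_of_complex :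
    μH[2 * finrank ℂ E - 1] (sphere (0 : E) 1) < ⊤ := by
  let _ : InnerProductSpace ℝ E := .complexToReal
  have hS := hausdorffMeasure_sphere_lt_top (E := E)
  rwa [finrank_real_of_complex, Nat.cast_mul, Nat.cast_ofNat] at hS

lemma tendsto_hausdorffMeasure_sphereSlab {v : E} (hv : v ≠ 0) :
    Tendsto (fun t => μH[2 * finrank ℂ E - 1] (sphereSlab ℂ v t)) (𝓝[>] 0) (𝓝 0) := by
  set K := (ℂ ∙ v)ᗮ.restrictScalars ℝ
  have hK : (finrank ℝ K : ℝ) < 2 * finrank ℂ E - 1 := by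
    have hKK : finrank ℝ K = 2 * finrank ℂ (ℂ ∙ v)ᗮ := finrank_real_of_complex _
    rw [hKK, ← finrank_orthogonal_span_singleton_add_one (𝕜 := ℂ) hv]
    push_cast
    linarith
  have hnull : μH[2 * finrank ℂ E - 1] (⋂ t > 0, sphereSlab ℂ v t) = 0 := by
    have hbdd : IsBounded (⋂ t > 0, sphereSlab ℂ v t) := isBounded_sphere.subset
      ((Set.iInter₂_subset (1 : ℝ) one_pos).trans Set.inter_subset_left)
    refine hausdorffMeasure_eq_zero_of_subset_submodule K (fun w hw => ?_) hbdd hK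
    have hw' : ∀ ε > 0, ‖⟪v, w⟫_ℂ‖ < ε := fun ε hε => (Set.mem_iInter₂.1 hw ε hε).2
    change w ∈ (ℂ ∙ v)ᗮ
    rw [Submodule.mem_orthogonal_singleton_iff_inner_right]
    by_contra hne
    exact (hw' _ (norm_pos_iff.2 hne)).false
  have hmono : ∀ s t, 0 < s → s ≤ t → sphereSlab ℂ v s ⊆ sphereSlab ℂ v t :=
    fun s t _ hst w hw => ⟨hw.1, hw.2.trans_le hst⟩
  have hmeas : ∀ t > 0, NullMeasurableSet (sphereSlab ℂ v t) μH[2 * finrank ℂ E - 1] :=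
    fun t _ => (isClosed_sphere.measurableSet.inter
      (measurableSet_lt (by fun_prop) measurable_const)).nullMeasurableSet
  have hfin : μH[2 * finrank ℂ E - 1] (sphereSlab ℂ v 1) ≠ ⊤ :=
    ((measure_mono Set.inter_subset_left).trans_lt hausdorffMeasure_sphere_lt_top_of_complex).ne
  have hlim := tendsto_measure_biInter_gt hmeas hmono ⟨1, one_pos, hfin⟩
  rwa [hnull] at hlim

end ComplexInnerProductSpace

section DualRadon

variable {n : ℕ}

lemma hausdorffMeasure_sphere_euclideanSpace_lt_top :
    μH[(2 * n - 1 : ℝ)] (sphere (0 : EuclideanSpace ℂ (Fin n)) 1) < ⊤ := by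
  simpa using hausdorffMeasure_sphere_lt_top_of_complex (E := EuclideanSpace ℂ (Fin n))

lemma pairC_eq_inner (z w : EuclideanSpace ℂ (Fin n)) :
    pairC z w = ⟪WithLp.toLp 2 (star (WithLp.ofLp z)), w⟫_ℂ := by
  simp [pairC, PiLp.inner_apply, mul_comm]

lemma norm_toLp_star_ofLp (z : EuclideanSpace ℂ (Fin n)) :
    ‖WithLp.toLp 2 (star (WithLp.ofLp z))‖ = ‖z‖ := by
  simp [EuclideanSpace.norm_eq]

lemma sphere_inter_norm_pairC_lt_eq_sphereSlab {z : EuclideanSpace ℂ (Fin n)} (hz : z ≠ 0)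
    (R : ℝ) : sphere 0 1 ∩ {w | ‖pairC z w‖ < R} =
      sphereSlab ℂ ((‖z‖⁻¹ : ℂ) • WithLp.toLp 2 (star (WithLp.ofLp z))) (R / ‖z‖) := by
  have hz₀ : 0 < ‖z‖ := norm_pos_iff.2 hz
  ext w
  simp only [sphereSlab, Set.mem_inter_iff, Set.mem_ofPred_eq, inner_smul_left, ← pairC_eq_inner,
    norm_mul, Complex.norm_conj, norm_inv, Complex.norm_real, norm_norm]
  rw [lt_div_iff₀ hz₀, inv_mul_eq_div, div_mul_cancel₀ _ hz₀.ne']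

lemma norm_dualRadonC_le {h : EuclideanSpace ℂ (Fin n) → ℂ → ℂ} {M R : ℝ}
    (hM : ∀ w s, ‖h w s‖ ≤ M) (hvan : ∀ w s, R ≤ ‖s‖ → h w s = 0)
    (z : EuclideanSpace ℂ (Fin n)) :
    ‖dualRadonC h z‖ ≤ M * μH[(2 * n - 1 : ℝ)].real (sphere 0 1 ∩ {w | ‖pairC z w‖ < R}) := by
  have hsub : sphere 0 1 ∩ {w | ‖pairC z w‖ < R} ⊆ sphere 0 1 := Set.inter_subset_left
  rw [dualRadonC, setIntegral_eq_of_subset_of_forall_sdiff_eq_zero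
    isClosed_sphere.measurableSet hsub fun w hw => hvan _ _ (not_lt.1 fun hlt => hw.2 ⟨hw.1, hlt⟩)]
  exact norm_setIntegral_le_of_norm_le_const
    ((measure_mono hsub).trans_lt hausdorffMeasure_sphere_euclideanSpace_lt_top) fun w _ => hM _ _

lemma norm_dualRadonC_le_sphereSlab {h : EuclideanSpace ℂ (Fin n) → ℂ → ℂ} {M R : ℝ}
    (hM : ∀ w s, ‖h w s‖ ≤ M) (hvan : ∀ w s, R ≤ ‖s‖ → h w s = 0)
    {v : EuclideanSpace ℂ (Fin n)} (hv : ‖v‖ = 1) {z : EuclideanSpace ℂ (Fin n)} (hz : z ≠ 0) :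
    ‖dualRadonC h z‖ ≤ M * μH[(2 * n - 1 : ℝ)].real (sphereSlab ℂ v (R / ‖z‖)) := by
  have hunit : ‖(‖z‖⁻¹ : ℂ) • WithLp.toLp 2 (star (WithLp.ofLp z))‖ = 1 := by
    rw [norm_smul, norm_toLp_star_ofLp, norm_inv, Complex.norm_real, norm_norm,
      inv_mul_cancel₀ (norm_ne_zero_iff.2 hz)]
  rw [measureReal_def, ← hausdorffMeasure_sphereSlab_eq hunit hv, ← measureReal_def,
    ← sphere_inter_norm_pairC_lt_eq_sphereSlab hz]
  exact norm_dualRadonC_le hM hvan z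

lemma tendsto_dualRadonC_comap_norm_atTop (hn : 1 ≤ n) {h : EuclideanSpace ℂ (Fin n) → ℂ → ℂ}
    {M R : ℝ} (hR : 0 < R) (hM : ∀ w s, ‖h w s‖ ≤ M) (hvan : ∀ w s, R ≤ ‖s‖ → h w s = 0) :
    Tendsto (dualRadonC h) (comap norm atTop) (𝓝 0) := by
  set v₀ : EuclideanSpace ℂ (Fin n) := EuclideanSpace.single ⟨0, hn⟩ 1
  have hv₀ : ‖v₀‖ = 1 := by simp [v₀]
  have hslab : Tendsto (fun t => μH[(2 * n - 1 : ℝ)].real (sphereSlab ℂ v₀ t)) (𝓝[>] 0) (𝓝 0) := by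
    have hlim := tendsto_hausdorffMeasure_sphereSlab (norm_ne_zero_iff.1 (hv₀ ▸ one_ne_zero))
    rw [finrank_euclideanSpace_fin] at hlim
    exact (ENNReal.tendsto_toReal ENNReal.zero_ne_top).comp hlim
  have hscale : Tendsto (fun z : EuclideanSpace ℂ (Fin n) => R / ‖z‖) (comap norm atTop) (𝓝[>] 0) :=
    tendsto_nhdsWithin_iff.2 ⟨tendsto_const_nhds.div_atTop tendsto_comap,
      (tendsto_comap.eventually_gt_atTop 0).mono fun z hz => div_pos hR hz⟩
  refine squeeze_zero_norm' ?_ (by simpa using (hslab.comp hscale).const_mul M)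
  filter_upwards [tendsto_comap.eventually_gt_atTop 0] with z hz
  exact norm_dualRadonC_le_sphereSlab hM hvan hv₀ (norm_pos_iff.1 hz)

end DualRadon

/-- There is a constant `C = C(n) > 0` such that if `h : S^{2n-1} × ℂ → ℂ` is bounded,
measurable and vanishes for `|s| ≥ R`, then `|(R*h)(z)| ≤ C · sup|h| · max(1, R²/‖z‖²)`
for all `z ≠ 0`; in particular `(R*h)(z) → 0` as `‖z‖ → ∞`. -/
theorem dualRadon_bound (n : ℕ) (hn : 1 ≤ n) :
    ∃ C : ℝ, 0 < C ∧ ∀ R : ℝ, 0 < R → ∀ h : EuclideanSpace ℂ (Fin n) → ℂ → ℂ,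
      Measurable (fun p : EuclideanSpace ℂ (Fin n) × ℂ => h p.1 p.2) →
      ∀ M : ℝ, (∀ w s, ‖h w s‖ ≤ M) →
      (∀ (w : EuclideanSpace ℂ (Fin n)) (s : ℂ), R ≤ ‖s‖ → h w s = 0) →
      (∀ z : EuclideanSpace ℂ (Fin n), z ≠ 0 →
        ‖dualRadonC h z‖ ≤ C * M * max 1 (R ^ 2 / ‖z‖ ^ 2)) ∧
      Filter.Tendsto (dualRadonC h)
        (Filter.comap (fun z : EuclideanSpace ℂ (Fin n) => ‖z‖) Filter.atTop) (nhds 0) := by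
  set σ : Measure (EuclideanSpace ℂ (Fin n)) := μH[(2 * n - 1 : ℝ)]
  have hS : σ (sphere 0 1) < ⊤ := hausdorffMeasure_sphere_euclideanSpace_lt_top
  refine ⟨σ.real (sphere 0 1) + 1, by positivity, fun R hR h _ M hM hvan =>
    ⟨fun z _ => ?_, tendsto_dualRadonC_comap_norm_atTop hn hR hM hvan⟩⟩
  have hM₀ : 0 ≤ M := (norm_nonneg _).trans (hM 0 0)
  calc ‖dualRadonC h z‖ ≤ M * σ.real (sphere 0 1) :=
        norm_setIntegral_le_of_norm_le_const hS fun w _ => hM _ _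
    _ ≤ (σ.real (sphere 0 1) + 1) * M * 1 := by nlinarith
    _ ≤ _ := by gcongr; exact le_max_left _ _
end

section
/- Let A ⊂ ℂ be a compact set such that ℂ \ A is connected, and let p ∈ ℂ \ A. Then there exist δ > 0 and an open, connected, unbounded set D ⊂ ℂ such that the open disk of radius δ centered at p is contained in D and dist(x, A) > δ for every x ∈ D. -/
open Metric

/-- If `A ⊆ ℂ` is compact with connected complement and `p ∉ A`, then there are `δ > 0`
and an open connected unbounded set `D ⊆ ℂ` containing the disk `ball p δ` and staying at
distance `> δ` from `A`. -/
theorem exists_unbounded_connected_open_avoiding (A : Set ℂ) (hA : IsCompact A)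
    (hAc : IsConnected Aᶜ) (p : ℂ) (hp : p ∈ Aᶜ) :
    ∃ δ : ℝ, 0 < δ ∧ ∃ D : Set ℂ, IsOpen D ∧ IsConnected D ∧ ¬Bornology.IsBounded D ∧
      ball p δ ⊆ D ∧ ∀ x ∈ D, ∀ a ∈ A, δ < dist x a := by
  have hub : ¬Bornology.IsBounded ((fun t : ℝ => ((t : ℝ) : ℂ)) '' Set.Ici (0:ℝ)) → True :=
    fun _ => trivial
  rcases A.eq_empty_or_nonempty with rfl | hAne
  · refine ⟨1, one_pos, Set.univ, isOpen_univ, isConnected_univ, ?_, Set.subset_univ _, ?_⟩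
    · intro h
      obtain ⟨C, hC⟩ := isBounded_iff_forall_norm_le.1 h
      have h1 := hC ((|C| + 1 : ℝ) : ℂ) (Set.mem_univ _)
      rw [Complex.norm_real, Real.norm_of_nonneg (by positivity)] at h1
      have := le_abs_self C
      linarith
    · intro x _ a ha; exact absurd ha (Set.notMem_empty a)
  -- A nonempty
  have hAcl : IsClosed A := hA.isClosed
  -- choose R with A ⊆ ball 0 R
  obtain ⟨R, hRpos, hR⟩ : ∃ R : ℝ, 0 < R ∧ A ⊆ ball (0 : ℂ) R := by
    obtain ⟨C, hC⟩ := hA.isBounded.subset_ball (0 : ℂ)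
    exact ⟨max C 0 + 1, by positivity,
      hC.trans (ball_subset_ball (by linarith [le_max_left C 0]))⟩
  -- choose far point q
  set q : ℂ := ((R + 1 : ℝ) : ℂ) with hq
  have hqnorm : ‖q‖ = R + 1 := by
    rw [hq, Complex.norm_real, Real.norm_of_nonneg (by linarith)]
  have hqA : q ∈ Aᶜ := by
    intro hqA
    have := hR hqA
    rw [mem_ball, dist_zero_right, hqnorm] at this
    linarith
  -- path from p to q in Aᶜ
  have hpc : IsPathConnected (Aᶜ : Set ℂ) :=
    (hAcl.isOpen_compl.isConnected_iff_isPathConnected).mp hAc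
  obtain ⟨γ, hγ⟩ := hpc.joinedIn p hp q hqA
  set K : Set ℂ := Set.range γ with hK
  have hKcomp : IsCompact K := isCompact_range γ.continuous
  have hKconn : IsConnected K := isConnected_range γ.continuous
  have hpK : p ∈ K := ⟨0, γ.source⟩
  have hqK : q ∈ K := ⟨1, γ.target⟩
  have hKne : K.Nonempty := ⟨p, hpK⟩
  have hKsub : K ⊆ Aᶜ := by rintro x ⟨t, rfl⟩; exact hγ t
  -- minimum of infDist over K
  obtain ⟨x₀, hx₀K, hx₀min⟩ := hKcomp.exists_isMinOn hKne (continuous_infDist_pt A).continuousOn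
  set m : ℝ := infDist x₀ A with hm
  have hmpos : 0 < m := (hAcl.notMem_iff_infDist_pos hAne).1 (hKsub hx₀K)
  set δ : ℝ := min (m / 2) (1 / 2) with hδ
  have hδpos : 0 < δ := lt_min (by positivity) (by norm_num)
  have hδm : δ < m := lt_of_le_of_lt (min_le_left _ _) (half_lt_self hmpos)
  have hδ1 : δ < 1 := lt_of_le_of_lt (min_le_right _ _) (by norm_num)
  have hδ2 : 2 * δ ≤ m := by
    have := min_le_left (m / 2) (1 / 2)
    linarith
  -- the set U
  set U : Set ℂ := {x | δ < infDist x A} with hU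
  have hUopen : IsOpen U := isOpen_lt continuous_const (continuous_infDist_pt A)
  have hKU : K ⊆ U := fun x hx => lt_of_lt_of_le hδm (hx₀min hx)
  have hpU : p ∈ U := hKU hpK
  set D : Set ℂ := connectedComponentIn U p with hD
  have hDopen : IsOpen D := hUopen.connectedComponentIn
  have hDne : D.Nonempty := connectedComponentIn_nonempty_iff.2 hpU
  have hDconn : IsConnected D := ⟨hDne, isPreconnected_connectedComponentIn⟩
  have hDU : D ⊆ U := connectedComponentIn_subset U p
  -- the ray
  set S : Set ℂ := (fun t : ℝ => ((t : ℝ) : ℂ)) '' Set.Ici (R + 1) with hS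
  have hSU : S ⊆ U := by
    rintro x ⟨t, ht, rfl⟩
    have htR : R + 1 ≤ t := ht
    have htpos : 0 < t := by linarith
    have h3 : t - R ≤ infDist ((t : ℝ) : ℂ) A := by
      have := hAne.to_subtype
      rw [Metric.infDist_eq_iInf]
      refine le_ciInf fun a => ?_
      obtain ⟨a, ha⟩ := a
      have h2 : ‖a‖ < R := by simpa [mem_ball, dist_zero_right] using hR ha
      have hnle : ‖((t : ℝ) : ℂ)‖ - ‖a‖ ≤ dist ((t : ℝ) : ℂ) a := by
        rw [dist_eq_norm]; exact norm_sub_norm_le _ _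
      rw [Complex.norm_real, Real.norm_of_nonneg htpos.le] at hnle
      exact le_of_lt (lt_of_lt_of_le (by linarith : t - R < t - ‖a‖) hnle)
    exact lt_of_lt_of_le (by linarith) h3
  have hqS : q ∈ S := ⟨R + 1, Set.mem_Ici.2 le_rfl, rfl⟩
  -- K ∪ S ⊆ D
  have hKSconn : IsPreconnected (K ∪ S) := by
    apply IsPreconnected.union q hqK hqS hKconn.isPreconnected
    exact (isPreconnected_Ici.image _ (Complex.continuous_ofReal.continuousOn))
  have hKSD : K ∪ S ⊆ D :=
    hKSconn.subset_connectedComponentIn (Set.mem_union_left _ hpK)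
      (Set.union_subset hKU hSU)
  have hSD : S ⊆ D := (Set.subset_union_right).trans hKSD
  -- unboundedness
  have hDunb : ¬Bornology.IsBounded D := by
    intro h
    obtain ⟨C, hC⟩ := isBounded_iff_forall_norm_le.1 h
    have hmem : ((max C R + 1 : ℝ) : ℂ) ∈ S :=
      ⟨max C R + 1, by simp [le_max_right, add_le_add_iff_right], rfl⟩
    have h1 := hC _ (hSD hmem)
    rw [Complex.norm_real, Real.norm_of_nonneg (by positivity)] at h1
    have := le_max_left C R
    linarith
  -- ball ⊆ D
  have hball : ball p δ ⊆ D := by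
    have hballU : ball p δ ⊆ U := by
      intro x hx
      have h1 : infDist p A ≤ infDist x A + dist p x := infDist_le_infDist_add_dist
      have h2 : m ≤ infDist p A := hx₀min hpK
      have h3 : dist p x < δ := by rw [dist_comm]; exact mem_ball.1 hx
      have : 2 * δ - δ < infDist x A := by linarith
      simpa [hU, Set.mem_setOf_eq] using lt_of_le_of_lt (by linarith : δ ≤ 2 * δ - δ) this
    exact (convex_ball p δ).isPreconnected.subset_connectedComponentIn (mem_ball_self hδpos) hballU
  refine ⟨δ, hδpos, D, hDopen, hDconn, hDunb, hball, ?_⟩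
  intro x hx a ha
  exact lt_of_lt_of_le (hDU hx) (infDist_le_dist_of_mem ha)
end
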